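/- arXiv:1908.08742 — 6 statements merged into one kernel-verified Lean document; each statement's English description precedes it below -/
import Mathlib

section
/- Let f : ℝⁿ → ℝ be a convex function which is Fréchet differentiable at x, and suppose c = f(x) is not a global minimum of f. Then the sub-level set {f ≤ c} has a unique supporting hyperplane at x. -/
open Filter Set Topology

lemma my_slope_tendsto {E : Type*} [NormedAddCommGroup E] [NormedSpace ℝ E]
    (f : E → ℝ) (x : E) (f' : E →L[ℝ] ℝ) (hdiff : HasFDerivAt f f' x) (v : E) :
    Tendsto (fun t : ℝ => (f (x + t • v) - f x) / t) (𝓝[>] (0:ℝ)) (𝓝 (f' v)) := by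
  have hline : HasDerivAt (fun t : ℝ => x + t • v) v 0 := by
    simpa using ((hasDerivAt_id (0:ℝ)).smul_const v).const_add x
  have hd : HasFDerivAt f f' ((fun t : ℝ => x + t • v) 0) := by simpa using hdiff
  have hcomp : HasDerivAt (fun t : ℝ => f (x + t • v)) (f' v) 0 := hd.comp_hasDerivAt 0 hline
  have hT := hasDerivAt_iff_tendsto_slope.mp hcomp
  have hT' := hT.mono_left (nhdsWithin_mono 0 (fun t ht => ne_of_gt ht))
  refine hT'.congr' ?_
  filter_upwards [self_mem_nhdsWithin] with t ht
  simp [slope_def_field, div_eq_inv_mul]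

lemma my_grad_ineq {E : Type*} [NormedAddCommGroup E] [NormedSpace ℝ E]
    (f : E → ℝ) (hf : ConvexOn ℝ Set.univ f) (x : E) (f' : E →L[ℝ] ℝ)
    (hdiff : HasFDerivAt f f' x) (v : E) : f' v ≤ f (x + v) - f x := by
  have hT := my_slope_tendsto f x f' hdiff v
  refine le_of_tendsto hT ?_
  filter_upwards [Ioo_mem_nhdsGT_of_mem (by simp : (0:ℝ) ∈ Ico (0:ℝ) 1)] with t ht
  obtain ⟨ht0, ht1⟩ := ht
  have hconv := hf.2 (Set.mem_univ x) (Set.mem_univ (x + v)) (by linarith : (0:ℝ) ≤ 1 - t)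
    (le_of_lt ht0) (by ring)
  have hxt : (1 - t) • x + t • (x + v) = x + t • v := by module
  rw [hxt] at hconv
  rw [div_le_iff₀ ht0]
  have : (1 - t) * f x + t * f (x + v) = f x + t * (f (x + v) - f x) := by ring
  linarith [this ▸ hconv]

lemma my_dir_lt {E : Type*} [NormedAddCommGroup E] [NormedSpace ℝ E]
    (f : E → ℝ) (x : E) (f' : E →L[ℝ] ℝ)
    (hdiff : HasFDerivAt f f' x) (v : E) (hv : f' v < 0) :
    ∃ t : ℝ, 0 < t ∧ f (x + t • v) < f x := by
  have hT := my_slope_tendsto f x f' hdiff v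
  have hev : ∀ᶠ t in 𝓝[>] (0:ℝ), (f (x + t • v) - f x) / t < 0 :=
    hT.eventually (Filter.Tendsto.eventually_lt_const hv tendsto_id) |>.mono (fun t ht => ht)
  obtain ⟨t, ht, ht0⟩ := (hev.and self_mem_nhdsWithin).exists
  refine ⟨t, ht0, ?_⟩
  rcases div_neg_iff.mp ht with h | h
  · linarith [h.2]
  · linarith [h.1]


/-- If `f` is convex, Fréchet differentiable at `x`, and `c = f x` is not a
global minimum, then the sub-level set `{f ≤ c}` is supported by a unique hyperplane at `x`:
there is a nonzero supporting functional, and any two nonzero supporting functionals are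
positive multiples of each other. -/
theorem unique_supporting_hyperplane_of_differentiable
    {E : Type*} [NormedAddCommGroup E] [NormedSpace ℝ E] [FiniteDimensional ℝ E]
    (f : E → ℝ) (hf : ConvexOn ℝ Set.univ f) (x : E) (f' : E →L[ℝ] ℝ)
    (hdiff : HasFDerivAt f f' x) (hmin : ∃ z : E, f z < f x) :
    (∃ ψ : E →L[ℝ] ℝ, ψ ≠ 0 ∧ ∀ y : E, f y ≤ f x → ψ y ≤ ψ x) ∧
    (∀ ψ₁ ψ₂ : E →L[ℝ] ℝ, ψ₁ ≠ 0 → ψ₂ ≠ 0 →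
      (∀ y : E, f y ≤ f x → ψ₁ y ≤ ψ₁ x) → (∀ y : E, f y ≤ f x → ψ₂ y ≤ ψ₂ x) →
      ∃ a : ℝ, 0 < a ∧ ψ₂ = a • ψ₁) := by
  have hgrad : ∀ v, f' v ≤ f (x + v) - f x := my_grad_ineq f hf x f' hdiff
  have hf'ne : f' ≠ 0 := by
    intro h
    obtain ⟨z, hz⟩ := hmin
    have h1 := hgrad (z - x)
    rw [add_sub_cancel] at h1
    simp [h] at h1
    linarith
  -- a direction of strict decrease
  obtain ⟨w, hw⟩ : ∃ w, f' w < 0 := by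
    obtain ⟨u, hu⟩ : ∃ u, f' u ≠ 0 := by
      by_contra hc
      push_neg at hc
      exact hf'ne (ContinuousLinearMap.ext fun u => by simp [hc u])
    refine ⟨-(f' u) • u, ?_⟩
    simp only [map_smul, smul_eq_mul]
    have : 0 < (f' u)^2 := by positivity
    nlinarith
  have key : ∀ ψ : E →L[ℝ] ℝ, ψ ≠ 0 → (∀ y, f y ≤ f x → ψ y ≤ ψ x) →
      ∃ a : ℝ, 0 < a ∧ ψ = a • f' := by
    intro ψ hψ hsupp
    have h1 : ∀ v, f' v < 0 → ψ v ≤ 0 := by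
      intro v hv
      obtain ⟨t, ht0, ht⟩ := my_dir_lt f x f' hdiff v hv
      have hs := hsupp (x + t • v) (le_of_lt ht)
      simp only [map_add, map_smul, smul_eq_mul] at hs
      by_contra hc
      push_neg at hc
      nlinarith
    have h2 : ∀ v, f' v ≤ 0 → ψ v ≤ 0 := by
      intro v hv
      by_contra hc
      push_neg at hc
      have hε : ∀ ε : ℝ, 0 < ε → ψ v + ε * ψ w ≤ 0 := by
        intro ε hε
        have hlt : f' (v + ε • w) < 0 := by
          simp only [map_add, map_smul, smul_eq_mul]
          nlinarith
        have := h1 _ hlt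
        simpa [map_add, map_smul, smul_eq_mul] using this
      have hψw : ψ w ≤ 0 := h1 w hw
      rcases eq_or_lt_of_le hψw with h | h
      · have := hε 1 one_pos
        rw [← h] at this
        linarith
      · have hεpos : 0 < ψ v / (2 * (-ψ w)) := div_pos hc (by linarith)
        have h3 := hε _ hεpos
        have hne : ψ w ≠ 0 := ne_of_lt h
        have h4 : ψ v / (2 * -ψ w) * ψ w = -(ψ v) / 2 := by
          field_simp
        rw [h4] at h3
        linarith
    have h3 : ∀ v, f' v = 0 → ψ v = 0 := by
      intro v hv
      have ha := h2 v hv.le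
      have hb := h2 (-v) (by simp [hv])
      simp only [map_neg, neg_nonpos] at hb
      linarith
    set a := ψ w / f' w with ha_def
    have hψw : ψ w ≤ 0 := h1 w hw
    have ha : 0 ≤ a := div_nonneg_iff.mpr (Or.inr ⟨hψw, hw.le⟩)
    have heq : ∀ v, ψ v = a * f' v := by
      intro v
      have hne' : f' w ≠ 0 := ne_of_lt hw
      have hker : f' (v - (f' v / f' w) • w) = 0 := by
        simp only [map_sub, map_smul, smul_eq_mul]
        field_simp
        ring
      have h0 := h3 _ hker
      simp only [map_sub, map_smul, smul_eq_mul] at h0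
      have hv : ψ v = f' v / f' w * ψ w := by linarith
      rw [hv, ha_def]
      field_simp
    have hane : a ≠ 0 := by
      intro h0
      apply hψ
      ext v
      simp [heq v, h0]
    refine ⟨a, lt_of_le_of_ne ha (Ne.symm hane), ?_⟩
    ext v
    simp [heq v]
  constructor
  · refine ⟨f', hf'ne, fun y hy => ?_⟩
    have h1 := hgrad (y - x)
    rw [add_sub_cancel, map_sub] at h1
    linarith
  · intro ψ₁ ψ₂ hn1 hn2 hs1 hs2
    obtain ⟨a₁, ha₁, e₁⟩ := key ψ₁ hn1 hs1
    obtain ⟨a₂, ha₂, e₂⟩ := key ψ₂ hn2 hs2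
    refine ⟨a₂ / a₁, by positivity, ?_⟩
    rw [e₁, e₂, smul_smul]
    congr 1
    field_simp
end

section
/- Let (X, ‖·‖) be a finite-dimensional normed space, K ⊆ X a convex body, and x ∉ K with metric projection p_K(x). Then p_K(x) is a metric projection onto K of every point on the ray {p_K(x) + t(x - p_K(x)) : t ≥ 0}. (K is a 'sun'.) -/
/-! Let `y = p + t • (x - p)`. For `t ≤ 1` the point `y` lies between `p` and `x`, and the
triangle inequality through `y` shows that `p` stays nearest. For `t ≥ 1` the point `x` lies
between `p` and `y` at parameter `t⁻¹`: a competitor `q ∈ K` for `y` yields the competitor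
`p + t⁻¹ • (q - p) ∈ K` for `x`, whose distance to `x` is `t⁻¹ ‖y - q‖`, so convexity
transfers the minimality of `p` from `x` to `y`. -/

section MetricProjection

variable {E : Type*} [SeminormedAddCommGroup E]

def IsMetricProjection (K : Set E) (x p : E) : Prop :=
  p ∈ K ∧ ∀ q ∈ K, ‖x - p‖ ≤ ‖x - q‖

variable {K : Set E} {x p : E}

theorem isMetricProjection_iff_norm_sub_eq_infDist (hp : p ∈ K) :
    IsMetricProjection K x p ↔ ‖x - p‖ = Metric.infDist x K := by
  have hle : Metric.infDist x K ≤ ‖x - p‖ := by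
    simpa only [dist_eq_norm] using Metric.infDist_le_dist_of_mem hp
  simp only [IsMetricProjection, hp, true_and, le_antisymm_iff, hle, and_true,
    Metric.le_infDist ⟨p, hp⟩, dist_eq_norm]

variable [NormedSpace ℝ E]

theorem norm_ray_sub_base (t : ℝ) (ht : 0 ≤ t) :
    ‖(p + t • (x - p)) - p‖ = t * ‖x - p‖ := by
  rw [add_sub_cancel_left, norm_smul, Real.norm_of_nonneg ht]

theorem IsMetricProjection.ray_of_le_one (h : IsMetricProjection K x p) {t : ℝ}
    (ht₀ : 0 ≤ t) (ht₁ : t ≤ 1) : IsMetricProjection K (p + t • (x - p)) p := by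
  refine ⟨h.1, fun q hq => ?_⟩
  set y := p + t • (x - p)
  have hxy : ‖x - y‖ = (1 - t) * ‖x - p‖ := by
    rw [show x - y = (1 - t) • (x - p) by simp only [y]; module, norm_smul,
      Real.norm_of_nonneg (sub_nonneg.2 ht₁)]
  have hxq : ‖x - p‖ ≤ ‖x - y‖ + ‖y - q‖ :=
    (h.2 q hq).trans (norm_sub_le_norm_sub_add_norm_sub x y q)
  rw [norm_ray_sub_base t ht₀]
  linarith

theorem IsMetricProjection.ray_of_one_le (hK : Convex ℝ K) (h : IsMetricProjection K x p)
    {t : ℝ} (ht : 1 ≤ t) : IsMetricProjection K (p + t • (x - p)) p := by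
  refine ⟨h.1, fun q hq => ?_⟩
  have ht₀ : 0 < t := zero_lt_one.trans_le ht
  have hz : p + t⁻¹ • (q - p) ∈ K :=
    hK.add_smul_sub_mem h.1 hq ⟨inv_nonneg.2 ht₀.le, inv_le_one_of_one_le₀ ht⟩
  have hxz : x - (p + t⁻¹ • (q - p)) = t⁻¹ • ((p + t • (x - p)) - q) := by
    rw [smul_sub _ (p + _), smul_add, smul_smul, inv_mul_cancel₀ ht₀.ne', one_smul]; module
  have hmin := h.2 _ hz
  rw [hxz, norm_smul, Real.norm_of_nonneg (inv_nonneg.2 ht₀.le)] at hmin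
  calc ‖(p + t • (x - p)) - p‖ = t * ‖x - p‖ := norm_ray_sub_base t ht₀.le
    _ ≤ t * (t⁻¹ * ‖(p + t • (x - p)) - q‖) := by gcongr
    _ = ‖(p + t • (x - p)) - q‖ := by field_simp

theorem IsMetricProjection.ray (hK : Convex ℝ K) (h : IsMetricProjection K x p)
    {t : ℝ} (ht : 0 ≤ t) : IsMetricProjection K (p + t • (x - p)) p := by
  rcases le_total t 1 with ht₁ | ht₁
  · exact h.ray_of_le_one ht ht₁
  · exact h.ray_of_one_le hK ht₁

end MetricProjection

theorem convex_body_is_sun_general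
    {E : Type*} [NormedAddCommGroup E] [NormedSpace ℝ E]
    (K : Set E) (hKconv : Convex ℝ K)
    (x : E)
    (p : E) (hp : p ∈ K) (hproj : ‖x - p‖ = Metric.infDist x K) :
    ∀ t : ℝ, 0 ≤ t →
      Metric.infDist (p + t • (x - p)) K = ‖(p + t • (x - p)) - p‖ := by
  intro t ht
  have hxp : IsMetricProjection K x p := (isMetricProjection_iff_norm_sub_eq_infDist hp).2 hproj
  exact ((isMetricProjection_iff_norm_sub_eq_infDist hp).1 (hxp.ray hKconv ht)).symm

/-- A convex body in a finite-dimensional normed space is a *sun*: if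
`p` is a metric projection of `x ∉ K` onto `K`, then `p` is a metric projection onto `K`
of every point of the ray `{p + t • (x - p) : t ≥ 0}`. -/
theorem convex_body_is_sun
    {E : Type*} [NormedAddCommGroup E] [NormedSpace ℝ E] [FiniteDimensional ℝ E]
    (K : Set E) (hKconv : Convex ℝ K) (hKcomp : IsCompact K)
    (hKint : (interior K).Nonempty) (x : E) (hx : x ∉ K)
    (p : E) (hp : p ∈ K) (hproj : ‖x - p‖ = Metric.infDist x K) :
    ∀ t : ℝ, 0 ≤ t →
      Metric.infDist (p + t • (x - p)) K = ‖(p + t • (x - p)) - p‖ :=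
  convex_body_is_sun_general K hKconv x p hp hproj
end

section
/- Let K be a convex body in a finite-dimensional normed space, z ∈ ∂K, u an outer normal of K at z, and δ > 0. Then u is Birkhoff left-orthogonal to some supporting hyperplane of the parallel body K + δB at the point x = z + δu. -/
/-- If `u` is an outer normal of a convex body `K` at `z ∈ ∂K` and
`δ > 0`, then `u` is Birkhoff left-orthogonal to some supporting hyperplane of the
parallel body `K + δB = {w : dist (w, K) ≤ δ}` at the point `x = z + δ • u`. -/
theorem outer_normal_parallel_body
    {E : Type*} [NormedAddCommGroup E] [NormedSpace ℝ E] [FiniteDimensional ℝ E]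
    (K : Set E) (hKconv : Convex ℝ K) (hKcomp : IsCompact K)
    (hKint : (interior K).Nonempty) (z : E) (hz : z ∈ frontier K)
    (u : E) (hu : ‖u‖ = 1)
    (hnormal : ∃ ψ : E →L[ℝ] ℝ, ψ ≠ 0 ∧ (∀ y ∈ K, ψ y ≤ ψ z) ∧ 0 < ψ u ∧
      ∀ w : E, ψ w = 0 → ∀ t : ℝ, ‖u‖ ≤ ‖u + t • w‖)
    (δ : ℝ) (hδ : 0 < δ) :
    ∃ φ : E →L[ℝ] ℝ, φ ≠ 0 ∧
      (∀ y : E, Metric.infDist y K ≤ δ → φ y ≤ φ (z + δ • u)) ∧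
      ∀ w : E, φ w = 0 → ∀ t : ℝ, ‖u‖ ≤ ‖u + t • w‖ := by
  obtain ⟨ψ, hψne, hψsupp, hψu, hψbirk⟩ := hnormal
  -- key estimate : ψ v ≤ ψ u * ‖v‖ for all v
  have key : ∀ v : E, ψ v ≤ ψ u * ‖v‖ := by
    intro v
    rcases le_or_gt (ψ v) 0 with h | h
    · exact h.trans (by positivity)
    · set c : ℝ := ψ v / ψ u with hc
      have hcpos : 0 < c := div_pos h hψu
      have hw : ψ (v - c • u) = 0 := by
        simp [map_sub, map_smul, hc, div_mul_cancel₀ _ hψu.ne']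
      have := hψbirk (v - c • u) hw (1 / c)
      have hnorm : ‖u + (1 / c) • (v - c • u)‖ = ‖v‖ / c := by
        have : u + (1 / c) • (v - c • u) = (1 / c) • v := by
          rw [smul_sub, smul_smul]
          field_simp
          rw [one_smul]; abel
        rw [this, norm_smul]
        simp [abs_of_pos hcpos, div_eq_inv_mul]
      rw [hu, hnorm, le_div_iff₀ hcpos, one_mul] at this
      calc ψ v = c * ψ u := by rw [hc, div_mul_cancel₀ _ hψu.ne']
        _ ≤ ‖v‖ * ψ u := by nlinarith
        _ = ψ u * ‖v‖ := mul_comm _ _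
  refine ⟨ψ, hψne, ?_, hψbirk⟩
  intro y hy
  have hKne : K.Nonempty := hKint.mono interior_subset
  obtain ⟨k, hkK, hk⟩ := hKcomp.exists_infDist_eq_dist hKne y
  have hdist : ‖y - k‖ ≤ δ := by
    rw [← dist_eq_norm, ← hk]; exact hy
  have h1 : ψ (y - k) ≤ ψ u * δ := by
    calc ψ (y - k) ≤ ψ u * ‖y - k‖ := key _
      _ ≤ ψ u * δ := by nlinarith
  have h2 : ψ k ≤ ψ z := hψsupp k hkK
  have : ψ y = ψ k + ψ (y - k) := by rw [← map_add, add_sub_cancel]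
  rw [this, map_add, map_smul]
  simp only [smul_eq_mul]
  linarith
end

section
/- Let ‖·‖ be a smooth and strictly convex norm on ℝⁿ with Legendre transform 𝓛, and let f : ℝⁿ → ℝ be convex and differentiable at x. Then the norm gradient ∇f(x) is the unique vector v ∈ ℝⁿ such that f(y) - f(x) ≥ 𝓛(v)(y - x) for all y ∈ ℝⁿ. -/
open Filter Topology

lemma slope_tendsto_aux {E : Type*} [NormedAddCommGroup E] [NormedSpace ℝ E]
    {f : E → ℝ} {x : E} (hdiff : DifferentiableAt ℝ f x) (u : E) :
    Tendsto (fun t : ℝ => (f (x + t • u) - f x) / t) (𝓝[>] (0:ℝ))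
      (𝓝 (fderiv ℝ f x u)) := by
  have h1 : HasDerivAt (fun t : ℝ => x + t • u) u 0 := by
    simpa using (((hasDerivAt_id (0:ℝ)).smul_const u).const_add x)
  have h2 : HasDerivAt (fun t : ℝ => f (x + t • u)) (fderiv ℝ f x u) 0 := by
    have hx : HasFDerivAt f (fderiv ℝ f x) ((0:ℝ) • u + x) := by
      simpa using hdiff.hasFDerivAt
    have := (HasFDerivAt.comp_hasDerivAt 0 (by simpa using hdiff.hasFDerivAt) h1)
    exact this
  have := h2.tendsto_slope_zero_right
  refine this.congr (fun t => ?_)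
  simp [smul_eq_mul, div_eq_inv_mul]

lemma subgrad_aux {E : Type*} [NormedAddCommGroup E] [NormedSpace ℝ E]
    {f : E → ℝ} (hf : ConvexOn ℝ Set.univ f) {x : E}
    (hdiff : DifferentiableAt ℝ f x) (y : E) :
    fderiv ℝ f x (y - x) ≤ f y - f x := by
  refine le_of_tendsto (slope_tendsto_aux hdiff (y - x)) ?_
  filter_upwards [Ioo_mem_nhdsGT_of_mem (Set.mem_Ico.2 ⟨le_refl (0:ℝ), one_pos⟩)]
    with t ht
  have h1 : x + t • (y - x) = (1 - t) • x + t • y := by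
    rw [smul_sub]; module
  have h2 : f (x + t • (y - x)) ≤ (1 - t) * f x + t * f y := by
    rw [h1]
    exact hf.2 (Set.mem_univ x) (Set.mem_univ y) (by linarith [ht.2]) ht.1.le (by ring)
  rw [div_le_iff₀ ht.1]
  nlinarith [ht.1]

lemma subgrad_unique_aux {E : Type*} [NormedAddCommGroup E] [NormedSpace ℝ E]
    {f : E → ℝ} {x : E} (hdiff : DifferentiableAt ℝ f x)
    (φ : E →L[ℝ] ℝ) (hφ : ∀ y : E, φ (y - x) ≤ f y - f x) :
    φ = fderiv ℝ f x := by
  have key : ∀ u : E, φ u ≤ fderiv ℝ f x u := by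
    intro u
    refine ge_of_tendsto (slope_tendsto_aux hdiff u) ?_
    filter_upwards [self_mem_nhdsWithin] with t (ht : (0:ℝ) < t)
    have := hφ (x + t • u)
    simp only [add_sub_cancel_left, map_smul, smul_eq_mul] at this
    rw [le_div_iff₀ ht]
    linarith
  ext u
  have h1 := key u
  have h2 := key (-u)
  simp only [map_neg] at h2
  linarith


/-- A normed space is *smooth* if every nonzero vector has a unique norming functional
(equivalently, a unique Birkhoff right-orthogonal hyperplane). -/
def IsSmoothNormed (F : Type*) [NormedAddCommGroup F] [NormedSpace ℝ F] : Prop :=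
  ∀ x : F, x ≠ 0 → ∃! f : F →L[ℝ] ℝ, ‖f‖ = 1 ∧ f x = ‖x‖

/-- `L` is the Legendre transform of the norm of `F`: `L 0 = 0`, and for `x ≠ 0`,
`L x x = ‖x‖²` and the kernel of `L x` is exactly the hyperplane which is Birkhoff
right-orthogonal to `x`. -/
def IsLegendre {F : Type*} [NormedAddCommGroup F] [NormedSpace ℝ F]
    (L : F → F →L[ℝ] ℝ) : Prop :=
  L 0 = 0 ∧ ∀ x : F, x ≠ 0 →
    L x x = ‖x‖ ^ 2 ∧ ∀ z : F, L x z = 0 ↔ ∀ t : ℝ, ‖x‖ ≤ ‖x + t • z‖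

/-- `v` is the *norm gradient* of `f` at `x`: if `f x` is the global minimum then
`v = 0`; otherwise `v ≠ 0`, `v` is Birkhoff left-orthogonal to the (unique) supporting
hyperplane of the sub-level set `{f ≤ f x}` at `x`, and `df_x v = ‖v‖²`. -/
def IsNormGradient {E : Type*} [NormedAddCommGroup E] [NormedSpace ℝ E]
    (f : E → ℝ) (x v : E) : Prop :=
  (¬(∃ z : E, f z < f x) ∧ v = 0) ∨
  ((∃ z : E, f z < f x) ∧ v ≠ 0 ∧
    (∀ ψ : E →L[ℝ] ℝ, ψ ≠ 0 → (∀ y : E, f y ≤ f x → ψ y ≤ ψ x) →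
      ∀ z : E, ψ z = 0 → ∀ t : ℝ, ‖v‖ ≤ ‖v + t • z‖) ∧
    fderiv ℝ f x v = ‖v‖ ^ 2)

/-- For a convex `f` differentiable at `x`, the norm gradient
`∇f(x)` is the unique vector `v` satisfying `f y - f x ≥ 𝓛(v)(y - x)` for all `y`. -/
theorem norm_gradient_characterization
    {E : Type*} [NormedAddCommGroup E] [NormedSpace ℝ E] [FiniteDimensional ℝ E]
    [StrictConvexSpace ℝ E] (hsm : IsSmoothNormed E)
    (L : E → E →L[ℝ] ℝ) (hL : IsLegendre L)
    (f : E → ℝ) (hf : ConvexOn ℝ Set.univ f) (x : E)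
    (hdiff : DifferentiableAt ℝ f x) (v : E) (hv : IsNormGradient f x v) :
    (∀ y : E, L v (y - x) ≤ f y - f x) ∧
    (∀ w : E, (∀ y : E, L w (y - x) ≤ f y - f x) → w = v) := by
  rcases hv with ⟨hmin, hv0⟩ | ⟨⟨z, hz⟩, hvne, hsupp, hdv⟩
  · -- case: x is a global minimum, v = 0
    push_neg at hmin
    subst hv0
    have hdf0 : fderiv ℝ f x = 0 := by
      have : IsLocalMin f x := Filter.Eventually.of_forall hmin
      exact this.fderiv_eq_zero
    constructor
    · intro y
      rw [hL.1]
      simpa using hmin y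
    · intro w hw
      by_contra hwne
      have hLw : L w = fderiv ℝ f x := subgrad_unique_aux hdiff (L w) hw
      have h1 : L w w = ‖w‖ ^ 2 := (hL.2 w hwne).1
      rw [hLw, hdf0] at h1
      simp at h1
      exact hwne (norm_eq_zero.1 (by nlinarith [sq_nonneg ‖w‖]))
  · -- case: v ≠ 0
    have hdf_ne : fderiv ℝ f x ≠ 0 := by
      intro h
      have := subgrad_aux hf hdiff z
      rw [h] at this
      simp at this
      linarith
    have hsupport : ∀ y : E, f y ≤ f x → fderiv ℝ f x y ≤ fderiv ℝ f x x := by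
      intro y hy
      have := subgrad_aux hf hdiff y
      rw [map_sub] at this
      linarith
    have hker : ∀ u : E, fderiv ℝ f x u = 0 → L v u = 0 := by
      intro u hu
      exact ((hL.2 v hvne).2 u).2 (hsupp (fderiv ℝ f x) hdf_ne hsupport u hu)
    have hv2 : (0:ℝ) < ‖v‖ ^ 2 := pow_pos (norm_pos_iff.2 hvne) 2
    have hLvv : L v v = ‖v‖ ^ 2 := (hL.2 v hvne).1
    have hLv : L v = fderiv ℝ f x := by
      ext u
      set d := fderiv ℝ f x with hd
      have hdu : d (u - (d u / ‖v‖ ^ 2) • v) = 0 := by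
        rw [map_sub, map_smul]
        rw [hdv]
        rw [smul_eq_mul, div_mul_cancel₀ _ (ne_of_gt hv2), sub_self]
      have h0 := hker _ hdu
      rw [map_sub, map_smul] at h0
      rw [hLvv] at h0
      have : L v u = (d u / ‖v‖ ^ 2) * ‖v‖ ^ 2 := by
        have : (d u / ‖v‖ ^ 2) • ‖v‖ ^ 2 = (d u / ‖v‖ ^ 2) * ‖v‖ ^ 2 := rfl
        linarith [h0]
      rw [this]
      field_simp
    constructor
    · intro y
      rw [hLv]
      exact subgrad_aux hf hdiff y
    · intro w hw
      have hwne : w ≠ 0 := by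
        intro h
        subst h
        have := hw z
        rw [hL.1] at this
        simp at this
        linarith
      have hLw : L w = fderiv ℝ f x := subgrad_unique_aux hdiff (L w) hw
      have hLww : L w w = ‖w‖ ^ 2 := (hL.2 w hwne).1
      have hw2 : (0:ℝ) < ‖w‖ ^ 2 := pow_pos (norm_pos_iff.2 hwne) 2
      set φ := fderiv ℝ f x with hφ
      have hφw : φ w = ‖w‖ ^ 2 := by rw [← hLw]; exact hLww
      have hφv : φ v = ‖v‖ ^ 2 := hdv
      obtain ⟨c, hc⟩ : ∃ c : ℝ, c = ‖v‖ ^ 2 / ‖w‖ ^ 2 := ⟨_, rfl⟩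
      have hcpos : 0 < c := hc ▸ div_pos hv2 hw2
      obtain ⟨h, hh⟩ : ∃ h : E, h = v - c • w := ⟨_, rfl⟩
      have hφh : φ h = 0 := by
        rw [hh, map_sub, map_smul, hφv, hφw]
        simp [hc]
        field_simp
        ring
      have hBw : ∀ t : ℝ, ‖w‖ ≤ ‖w + t • h‖ :=
        ((hL.2 w hwne).2 h).1 (by rw [hLw]; exact hφh)
      have hBv : ∀ t : ℝ, ‖v‖ ≤ ‖v + t • h‖ :=
        ((hL.2 v hvne).2 h).1 (by rw [hLv]; exact hφh)
      have e1 : ‖v - h‖ = c * ‖w‖ := by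
        have : v - h = c • w := by rw [hh]; abel
        rw [this, norm_smul, Real.norm_eq_abs, abs_of_pos hcpos]
      have e2 : ‖v‖ ≤ c * ‖w‖ := by
        have h5 := hBv (-1)
        rw [show v + (-1 : ℝ) • h = v - h by module] at h5
        rwa [e1] at h5
      have e3 : c * ‖w‖ ≤ ‖v‖ := by
        have := hBw c⁻¹
        have h4 : c • (w + c⁻¹ • h) = v := by
          rw [smul_add, smul_smul, mul_inv_cancel₀ (ne_of_gt hcpos), one_smul, hh]
          abel
        calc c * ‖w‖ ≤ c * ‖w + c⁻¹ • h‖ := by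
              exact mul_le_mul_of_nonneg_left this hcpos.le
          _ = ‖c • (w + c⁻¹ • h)‖ := by
              rw [norm_smul, Real.norm_eq_abs, abs_of_pos hcpos]
          _ = ‖v‖ := by rw [h4]
      have hnorm : ‖v - h‖ = ‖v‖ := by rw [e1]; linarith
      have hzero : h = 0 := by
        by_contra hne
        have hne' : v ≠ v - h := fun heq => hne (sub_eq_self.mp heq.symm)
        have hcombo : ‖(1/2 : ℝ) • v + (1/2 : ℝ) • (v - h)‖ < ‖v‖ :=
          norm_combo_lt_of_ne (le_refl ‖v‖) hnorm.le hne' (by norm_num) (by norm_num)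
            (by norm_num)
        have hmid : (1/2 : ℝ) • v + (1/2 : ℝ) • (v - h) = v + (-(1/2) : ℝ) • h := by
          module
        rw [hmid] at hcombo
        exact absurd (hBv (-(1/2))) (not_le.2 hcombo)
      have hvw : v = c • w := by
        have h6 : v - c • w = 0 := by rw [← hh, hzero]
        exact sub_eq_zero.mp h6
      have hnv : ‖v‖ = c * ‖w‖ := by
        rw [hvw, norm_smul, Real.norm_eq_abs, abs_of_pos hcpos]
      have hcw : c * ‖w‖ ^ 2 = ‖v‖ ^ 2 := by
        rw [hc]; field_simp
      have h7 : c * ‖w‖ ^ 2 = c ^ 2 * ‖w‖ ^ 2 := by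
        rw [hcw, hnv]; ring
      have h8 : c = c ^ 2 := mul_right_cancel₀ (ne_of_gt hw2) h7
      have hc1 : c = 1 :=
        (mul_left_cancel₀ (ne_of_gt hcpos)
          (by rw [mul_one, ← sq]; exact h8 : c * 1 = c * c)).symm
      rw [hvw, hc1, one_smul]
end

section
/- Let ‖·‖ be a smooth and strictly convex norm on ℝⁿ with Legendre transform 𝓛, and f : ℝⁿ → ℝ convex. For every x ∈ ℝⁿ the norm sub-differential ∂f(x) is nonempty, and for every u ∈ ℝⁿ, f'₊(x,u) = max{𝓛(w)(u) : w ∈ ∂f(x)}. -/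
/-- `d` is the one-sided directional derivative `f'₊(x, u)` of `f` at `x` in
direction `u`. -/
def HasPosDirDeriv {E : Type*} [NormedAddCommGroup E] [NormedSpace ℝ E]
    (f : E → ℝ) (x u : E) (d : ℝ) : Prop :=
  Filter.Tendsto (fun t : ℝ => (f (x + t • u) - f x) / t)
    (nhdsWithin 0 (Set.Ioi 0)) (nhds d)

lemma legendre_surj {E : Type*} [NormedAddCommGroup E] [NormedSpace ℝ E]
    [FiniteDimensional ℝ E] (L : E → E →L[ℝ] ℝ) (hL : IsLegendre L)
    (φ : E →L[ℝ] ℝ) : ∃ w : E, L w = φ := by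
  by_cases hφ : φ = 0
  · exact ⟨0, by rw [hL.1, hφ]⟩
  · have hEnt : Nontrivial E := by
      by_contra h
      rw [not_nontrivial_iff_subsingleton] at h
      exact hφ (by ext v; rw [Subsingleton.elim v 0]; simp)
    have hsph : (Metric.sphere (0:E) 1).Nonempty :=
      NormedSpace.sphere_nonempty.mpr zero_le_one
    obtain ⟨x₀, hx₀s, hmax⟩ := (isCompact_sphere (0:E) 1).exists_isMaxOn hsph
      (φ.continuous.continuousOn)
    have hx₀ : ‖x₀‖ = 1 := by simpa using hx₀s
    have hmax' : ∀ y ∈ Metric.sphere (0:E) 1, φ y ≤ φ x₀ := hmax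
    have hpos : 0 ≤ φ x₀ := by
      have := hmax' (-x₀) (by simp [hx₀])
      simp only [map_neg] at this; linarith
    have hnorm : ‖φ‖ = φ x₀ := by
      apply le_antisymm
      · apply φ.opNorm_le_bound hpos
        intro y
        rcases eq_or_ne y 0 with rfl | hy
        · simp
        · have hyn : (0:ℝ) < ‖y‖ := norm_pos_iff.mpr hy
          have h1 : ‖y‖⁻¹ • y ∈ Metric.sphere (0:E) 1 := by
            simp [norm_smul, abs_of_pos (inv_pos.mpr hyn), inv_mul_cancel₀ hyn.ne']
          have h2 : -(‖y‖⁻¹ • y) ∈ Metric.sphere (0:E) 1 := by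
            simp [norm_smul, abs_of_pos (inv_pos.mpr hyn), inv_mul_cancel₀ hyn.ne']
          have ha := hmax' _ h1
          have hb := hmax' _ h2
          simp only [map_smul, map_neg, smul_eq_mul] at ha hb
          have ha' : φ y ≤ φ x₀ * ‖y‖ := by
            calc φ y = ‖y‖⁻¹ * φ y * ‖y‖ := by field_simp
              _ ≤ φ x₀ * ‖y‖ := mul_le_mul_of_nonneg_right ha hyn.le
          have hb' : -φ y ≤ φ x₀ * ‖y‖ := by
            calc -φ y = -(‖y‖⁻¹ * φ y) * ‖y‖ := by field_simp
              _ ≤ φ x₀ * ‖y‖ := mul_le_mul_of_nonneg_right hb hyn.le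
          have : |φ y| ≤ φ x₀ * ‖y‖ := abs_le.mpr ⟨by linarith, ha'⟩
          simpa using this
      · calc φ x₀ ≤ |φ x₀| := le_abs_self _
          _ ≤ ‖φ‖ * ‖x₀‖ := by simpa using φ.le_opNorm x₀
          _ = ‖φ‖ := by rw [hx₀, mul_one]
    have hφn : (0:ℝ) < ‖φ‖ := norm_pos_iff.mpr hφ
    set v : E := ‖φ‖ • x₀ with hv
    have hx₀0 : x₀ ≠ 0 := by
      intro h; rw [h, norm_zero] at hx₀; exact one_ne_zero hx₀.symm
    have hv0 : v ≠ 0 := smul_ne_zero hφn.ne' hx₀0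
    have hvn : ‖v‖ = ‖φ‖ := by
      rw [hv, norm_smul, hx₀, mul_one, norm_norm]
    have hφv : φ v = ‖φ‖ ^ 2 := by
      rw [hv, map_smul, smul_eq_mul, ← hnorm]; ring
    obtain ⟨hvv, hker⟩ := hL.2 v hv0
    have hzero : ∀ z : E, φ z = 0 → L v z = 0 := by
      intro z hz
      apply (hker z).mpr
      intro t
      have h1 : φ (v + t • z) = ‖φ‖ ^ 2 := by
        rw [map_add, hφv, map_smul, smul_eq_mul, hz, mul_zero, add_zero]
      have h2 : ‖φ‖ ^ 2 ≤ ‖φ‖ * ‖v + t • z‖ := by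
        calc ‖φ‖ ^ 2 = φ (v + t • z) := h1.symm
          _ ≤ |φ (v + t • z)| := le_abs_self _
          _ ≤ ‖φ‖ * ‖v + t • z‖ := by simpa using φ.le_opNorm (v + t • z)
      rw [hvn]
      nlinarith
    refine ⟨v, ?_⟩
    ext z
    have hc : φ (z - (φ z / ‖φ‖ ^ 2) • v) = 0 := by
      rw [map_sub, map_smul, smul_eq_mul, hφv]
      field_simp
      ring
    have := hzero _ hc
    rw [map_sub, map_smul, smul_eq_mul, sub_eq_zero] at this
    rw [this, hvv, hvn]
    field_simp

/-- For a convex `f` and any `x`, the norm sub-differential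
`∂f(x) = {v : ∀ y, 𝓛(v)(y-x) ≤ f y - f x}` is nonempty, and for each direction `u`
the one-sided derivative `f'₊(x,u)` equals `max {𝓛(w)(u) : w ∈ ∂f(x)}`. -/
theorem norm_subdifferential_nonempty_max
    {E : Type*} [NormedAddCommGroup E] [NormedSpace ℝ E] [FiniteDimensional ℝ E]
    [StrictConvexSpace ℝ E] (hsm : IsSmoothNormed E)
    (L : E → E →L[ℝ] ℝ) (hL : IsLegendre L)
    (f : E → ℝ) (hf : ConvexOn ℝ Set.univ f) (x : E)
    (g : E → ℝ) (hg : ∀ u : E, HasPosDirDeriv f x u (g u)) :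
    {v : E | ∀ y : E, L v (y - x) ≤ f y - f x}.Nonempty ∧
    ∀ u : E, ∃ w : E, (∀ y : E, L w (y - x) ≤ f y - f x) ∧ L w u = g u ∧
      ∀ w' : E, (∀ y : E, L w' (y - x) ≤ f y - f x) → L w' u ≤ g u := by
  have hconv : ∀ u : E, ConvexOn ℝ Set.univ (fun t : ℝ => f (x + t • u)) := by
    intro u
    have h := hf.comp_affineMap (AffineMap.lineMap x (x + u))
    have he : (fun t : ℝ => f (x + t • u)) = f ∘ (AffineMap.lineMap x (x + u)) := by
      funext t
      simp [AffineMap.lineMap_apply, add_comm]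
    rw [he]
    simpa using h
  have hmono : ∀ (u : E) (s t : ℝ), 0 < s → s ≤ t →
      (f (x + s • u) - f x) / s ≤ (f (x + t • u) - f x) / t := by
    intro u s t hs hst
    have := (hconv u).secant_mono (a := 0) (x := s) (y := t) (Set.mem_univ _)
      (Set.mem_univ _) (Set.mem_univ _) hs.ne' (hs.trans_le hst).ne' hst
    simpa using this
  have hg0 : g 0 = 0 := by
    have h0 : Filter.Tendsto (fun t : ℝ => (f (x + t • (0:E)) - f x) / t)
        (nhdsWithin 0 (Set.Ioi 0)) (nhds 0) := by
      have he : (fun t : ℝ => (f (x + t • (0:E)) - f x) / t) = fun _ => 0 := by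
        funext t; simp
      rw [he]; exact tendsto_const_nhds
    exact tendsto_nhds_unique (hg 0) h0
  have hcomp : ∀ c : ℝ, 0 < c → ∀ u : E,
      Filter.Tendsto (fun t : ℝ => (f (x + (c*t) • u) - f x) / (c*t))
        (nhdsWithin 0 (Set.Ioi 0)) (nhds (g u)) := by
    intro c hc u
    apply (hg u).comp
    rw [tendsto_nhdsWithin_iff]
    constructor
    · have h1 : Filter.Tendsto (fun t : ℝ => c * t) (nhds (0:ℝ)) (nhds (0:ℝ)) := by
        have := (continuous_const.mul continuous_id : Continuous fun t : ℝ => c * t).tendsto (0:ℝ)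
        have h0 : ((fun _ : ℝ => c) * fun t : ℝ => t) 0 = 0 := mul_zero c
        rw [h0] at this
        exact this
      exact h1.mono_left nhdsWithin_le_nhds
    · filter_upwards [self_mem_nhdsWithin] with t ht
      exact mul_pos hc ht
  have hhom : ∀ c : ℝ, 0 < c → ∀ u : E, g (c • u) = c * g u := by
    intro c hc u
    have h1 : Filter.Tendsto (fun t : ℝ => (f (x + t • (c • u)) - f x) / t)
        (nhdsWithin 0 (Set.Ioi 0)) (nhds (c * g u)) := by
      have h2 := (hcomp c hc u).const_mul c
      apply h2.congr'
      filter_upwards [self_mem_nhdsWithin] with t ht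
      rw [Set.mem_Ioi] at ht
      rw [smul_smul, mul_comm t c]
      field_simp
    exact (tendsto_nhds_unique (hg (c • u)) h1)
  have hadd : ∀ u v : E, g (u + v) ≤ g u + g v := by
    intro u v
    have h2 : Filter.Tendsto (fun t : ℝ => (f (x + (2*t) • u) - f x) / (2*t)
        + (f (x + (2*t) • v) - f x) / (2*t)) (nhdsWithin 0 (Set.Ioi 0))
        (nhds (g u + g v)) :=
      (hcomp 2 two_pos u).add (hcomp 2 two_pos v)
    refine le_of_tendsto_of_tendsto (hg (u + v)) h2 ?_
    filter_upwards [self_mem_nhdsWithin] with t ht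
    rw [Set.mem_Ioi] at ht
    have hmid := hf.2 (Set.mem_univ (x + (2*t) • u)) (Set.mem_univ (x + (2*t) • v))
      (by norm_num : (0:ℝ) ≤ 1/2) (by norm_num : (0:ℝ) ≤ 1/2) (by norm_num)
    have heq : (1/2 : ℝ) • (x + (2*t) • u) + (1/2 : ℝ) • (x + (2*t) • v)
        = x + t • (u + v) := by
      module
    rw [heq] at hmid
    have hcombine : (f (x + (2*t) • u) - f x) / (2*t) + (f (x + (2*t) • v) - f x) / (2*t)
        = (f (x + (2*t) • u) + f (x + (2*t) • v) - 2 * f x) / (2*t) := by ring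
    simp only [smul_eq_mul] at hmid
    rw [hcombine, div_le_div_iff₀ ht (by linarith)]
    nlinarith [hmid]
  have hub : ∀ u : E, g u ≤ f (x + u) - f x := by
    intro u
    refine le_of_tendsto (hg u) ?_
    filter_upwards [Ioc_mem_nhdsGT_of_mem (Set.left_mem_Ico.mpr zero_lt_one)] with t ht
    have := hmono u t 1 ht.1 ht.2
    simpa using this
  have hlb : ∀ w' : E, (∀ y : E, L w' (y - x) ≤ f y - f x) → ∀ u : E, L w' u ≤ g u := by
    intro w' hw' u
    refine ge_of_tendsto (hg u) ?_
    filter_upwards [self_mem_nhdsWithin] with t ht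
    rw [Set.mem_Ioi] at ht
    have h1 := hw' (x + t • u)
    rw [add_sub_cancel_left, map_smul, smul_eq_mul] at h1
    rw [le_div_iff₀ ht]
    nlinarith [h1]
  have hexist0 : ∀ u : E, u ≠ 0 → ∃ φ : E →ₗ[ℝ] ℝ, (∀ v : E, φ v ≤ g v) ∧ φ u = g u := by
    intro u hu
    have H : ∀ c : ℝ, c • u = 0 → c • (g u) = 0 := by
      intro c hc
      rcases smul_eq_zero.mp hc with h | h
      · simp [h]
      · exact absurd h hu
    set f₀ := LinearPMap.mkSpanSingleton' (σ := RingHom.id ℝ) u (g u) H with hf₀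
    have hdom : ∀ z : f₀.domain, f₀ z ≤ g z := by
      rintro ⟨z, hz⟩
      have hz' : z ∈ Submodule.span ℝ {u} := hz
      obtain ⟨c, rfl⟩ := Submodule.mem_span_singleton.mp hz'
      rw [LinearPMap.mkSpanSingleton'_apply]
      rw [RingHom.id_apply]
      rcases lt_trichotomy c 0 with hc | rfl | hc
      · have h1 : 0 ≤ g (c • u) + g (-(c • u)) := by
          have h3 := hadd (c • u) (-(c • u))
          simp only [add_neg_cancel, hg0] at h3
          linarith
        have h2 : g (-(c • u)) = -c * g u := by
          rw [← neg_smul]; exact hhom (-c) (by linarith) u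
        simp only [smul_eq_mul]
        linarith
      · simp [hg0]
      · rw [smul_eq_mul, hhom c hc u]
    obtain ⟨φ, hφ1, hφ2⟩ := exists_extension_of_le_sublinear f₀ g
      (fun c hc v => hhom c hc v) hadd hdom
    refine ⟨φ, hφ2, ?_⟩
    have hmem : u ∈ f₀.domain := Submodule.mem_span_singleton_self u
    have h4 := hφ1 ⟨u, hmem⟩
    rwa [LinearPMap.mkSpanSingleton'_apply_self] at h4
  have hexist : ∀ u : E, ∃ φ : E →ₗ[ℝ] ℝ, (∀ v : E, φ v ≤ g v) ∧ φ u = g u := by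
    intro u
    rcases eq_or_ne u 0 with rfl | hu
    · rcases subsingleton_or_nontrivial E with hE | hE
      · exact ⟨0, fun v => by rw [Subsingleton.elim v (0:E)]; simp [hg0], by simp [hg0]⟩
      · obtain ⟨u₀, hu₀⟩ := exists_ne (0 : E)
        obtain ⟨φ, hφd, _⟩ := hexist0 u₀ hu₀
        exact ⟨φ, hφd, by simp [hg0]⟩
    · exact hexist0 u hu
  have main : ∀ u : E, ∃ w : E, (∀ y : E, L w (y - x) ≤ f y - f x) ∧ L w u = g u ∧
      ∀ w' : E, (∀ y : E, L w' (y - x) ≤ f y - f x) → L w' u ≤ g u := by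
    intro u
    obtain ⟨φ, hφd, hφu⟩ := hexist u
    obtain ⟨w, hw⟩ := legendre_surj L hL (LinearMap.toContinuousLinearMap φ)
    have hwv : ∀ v : E, L w v = φ v := fun v => by rw [hw]; rfl
    refine ⟨w, ?_, ?_, fun w' hw' => hlb w' hw' u⟩
    · intro y
      calc L w (y - x) = φ (y - x) := hwv _
        _ ≤ g (y - x) := hφd _
        _ ≤ f (x + (y - x)) - f x := hub _
        _ = f y - f x := by rw [show x + (y - x) = y from by abel]
    · rw [hwv, hφu]
  refine ⟨?_, main⟩
  obtain ⟨w, hw, _, _⟩ := main 0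
  exact ⟨w, hw⟩
end

section
/- Let ρ : ℝⁿ → ℝ be a norm whose unit ball is smooth (and which is strictly convex). Then ρ is Fréchet differentiable on ℝⁿ \ {0}, its norm gradient satisfies ∇ρ(x) = x/ρ(x), and its Legendre transform satisfies 𝓛(x) = ρ(x)·dρ_x for each x ≠ 0. -/
open Set

section Aux
variable {E : Type*} [NormedAddCommGroup E] [NormedSpace ℝ E]

/-- Difference quotient of the norm at `x` in direction `u` with step `t`. -/
noncomputable def nq (x : E) (t : ℝ) (u : E) : ℝ := (‖x + t • u‖ - ‖x‖) / t

lemma nq_mono (x : E) (u : E) {s t : ℝ} (hs : 0 < s) (hst : s ≤ t) :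
    nq x s u ≤ nq x t u := by
  have ht : 0 < t := hs.trans_le hst
  have hc0 : 0 < s / t := div_pos hs ht
  have hc1 : s / t ≤ 1 := (div_le_one ht).2 hst
  have key : x + s • u = (1 - s / t) • x + (s / t) • (x + t • u) := by
    rw [smul_add, smul_smul, div_mul_cancel₀ _ ht.ne', sub_smul, one_smul]
    abel
  have hn : ‖x + s • u‖ ≤ (1 - s / t) * ‖x‖ + (s / t) * ‖x + t • u‖ := by
    rw [key]
    calc ‖(1 - s / t) • x + (s / t) • (x + t • u)‖
        ≤ ‖(1 - s / t) • x‖ + ‖(s / t) • (x + t • u)‖ := norm_add_le _ _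
      _ = (1 - s / t) * ‖x‖ + (s / t) * ‖x + t • u‖ := by
          rw [norm_smul, norm_smul, Real.norm_eq_abs, Real.norm_eq_abs,
            abs_of_nonneg (by linarith), abs_of_nonneg hc0.le]
  rw [nq, nq, div_le_div_iff₀ hs ht]
  have hn' : ‖x + s • u‖ - ‖x‖ ≤ (s / t) * (‖x + t • u‖ - ‖x‖) := by linarith
  have h2 : (‖x + s • u‖ - ‖x‖) * t ≤ s / t * (‖x + t • u‖ - ‖x‖) * t :=
    mul_le_mul_of_nonneg_right hn' ht.le
  have h3 : s / t * (‖x + t • u‖ - ‖x‖) * t = (‖x + t • u‖ - ‖x‖) * s := by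
    field_simp
  linarith

lemma nq_le (x u : E) {t : ℝ} (ht : 0 < t) : nq x t u ≤ ‖u‖ := by
  rw [nq, div_le_iff₀ ht]
  have := norm_add_le x (t • u)
  rw [norm_smul, Real.norm_eq_abs, abs_of_nonneg ht.le] at this
  linarith

lemma le_nq (x u : E) (f : E →L[ℝ] ℝ) (hf1 : ‖f‖ = 1) (hfx : f x = ‖x‖)
    {t : ℝ} (ht : 0 < t) : f u ≤ nq x t u := by
  have h1 : f (x + t • u) ≤ ‖x + t • u‖ := by
    calc f (x + t • u) ≤ |f (x + t • u)| := le_abs_self _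
      _ ≤ ‖f‖ * ‖x + t • u‖ := f.le_opNorm _
      _ = ‖x + t • u‖ := by rw [hf1, one_mul]
  rw [map_add, map_smul, smul_eq_mul, hfx] at h1
  rw [nq, le_div_iff₀ ht]
  linarith

end Aux

section Main
variable {E : Type*} [NormedAddCommGroup E] [NormedSpace ℝ E] [FiniteDimensional ℝ E]

omit [FiniteDimensional ℝ E] in
lemma phi_eq_f (x : E) (hx : x ≠ 0) (f : E →L[ℝ] ℝ) (hf1 : ‖f‖ = 1) (hfx : f x = ‖x‖)
    (huniq : ∀ g : E →L[ℝ] ℝ, ‖g‖ = 1 ∧ g x = ‖x‖ → g = f) (u : E) :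
    (⨅ t : Ioi (0:ℝ), nq x t u) = f u := by
  set φ : E → ℝ := fun v => ⨅ t : Ioi (0:ℝ), nq x t v with hφ
  have hbdd : ∀ v : E, BddBelow (Set.range fun t : Ioi (0:ℝ) => nq x t v) := by
    intro v
    refine ⟨f v, ?_⟩
    rintro _ ⟨t, rfl⟩
    exact le_nq x v f hf1 hfx t.2
  have hφ_le : ∀ v : E, ∀ t : ℝ, 0 < t → φ v ≤ nq x t v := fun v t ht =>
    ciInf_le (hbdd v) ⟨t, ht⟩
  have hle_φ : ∀ v : E, f v ≤ φ v := fun v =>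
    le_ciInf fun t => le_nq x v f hf1 hfx t.2
  -- positive homogeneity
  have hnq_smul : ∀ (c : ℝ), 0 < c → ∀ (v : E) (t : ℝ), 0 < t →
      nq x t (c • v) = c * nq x (t * c) v := by
    intro c hc v t ht
    rw [nq, nq, smul_smul]
    field_simp
  have hhom : ∀ c : ℝ, 0 < c → ∀ v : E, φ (c • v) = c * φ v := by
    intro c hc v
    have key : ∀ t : ℝ, 0 < t → φ (c • v) ≤ c * nq x t v := by
      intro t ht
      have h := hφ_le (c • v) (t / c) (div_pos ht hc)
      rwa [hnq_smul c hc v (t / c) (div_pos ht hc), div_mul_cancel₀ _ hc.ne'] at h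
    have h1 : φ (c • v) / c ≤ φ v := by
      simp only [hφ]
      exact le_ciInf fun t => (div_le_iff₀' hc).2 (key t t.2)
    have h2 : c * φ v ≤ φ (c • v) := by
      simp only [hφ]
      refine le_ciInf fun t => ?_
      rw [hnq_smul c hc v t t.2]
      exact mul_le_mul_of_nonneg_left (hφ_le v (t * c) (mul_pos t.2 hc)) hc.le
    have h1' := (div_le_iff₀' hc).1 h1
    linarith
  -- subadditivity
  have hnq_add : ∀ (a b : E) (t : ℝ), 0 < t →
      nq x t (a + b) ≤ nq x (2 * t) a + nq x (2 * t) b := by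
    intro a b t ht
    have hmid : x + t • (a + b) = (1 / 2 : ℝ) • (x + (2 * t) • a) + (1 / 2 : ℝ) • (x + (2 * t) • b) := by
      module
    have hn : ‖x + t • (a + b)‖ ≤ (1 / 2 : ℝ) * ‖x + (2 * t) • a‖ + (1 / 2 : ℝ) * ‖x + (2 * t) • b‖ := by
      rw [hmid]
      refine (norm_add_le _ _).trans ?_
      rw [norm_smul, norm_smul, Real.norm_eq_abs,
        abs_of_pos (by norm_num : (0:ℝ) < 1/2)]
    rw [nq, nq, nq]
    rw [← add_div, div_le_div_iff₀ ht (by linarith : (0:ℝ) < 2 * t)]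
    nlinarith
  have hadd : ∀ a b : E, φ (a + b) ≤ φ a + φ b := by
    intro a b
    have key : ∀ s s' : ℝ, 0 < s → 0 < s' → φ (a + b) ≤ nq x s a + nq x s' b := by
      intro s s' hs hs'
      set t := min s s' / 2 with htd
      have ht : 0 < t := by positivity
      have h2t : 0 < 2 * t := by linarith
      calc φ (a + b) ≤ nq x t (a + b) := hφ_le _ t ht
        _ ≤ nq x (2 * t) a + nq x (2 * t) b := hnq_add a b t ht
        _ ≤ nq x s a + nq x s' b := by
            gcongr
            · exact nq_mono x a h2t (by rw [htd]; have := min_le_left s s'; linarith)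
            · exact nq_mono x b h2t (by rw [htd]; have := min_le_right s s'; linarith)
    have step : ∀ s : ℝ, 0 < s → φ (a + b) - nq x s a ≤ φ b := by
      intro s hs
      exact le_ciInf fun t => by have := key s t hs t.2; linarith
    have : φ (a + b) - φ b ≤ φ a := le_ciInf fun t => by have := step t t.2; linarith
    linarith
  -- values at x and -x
  have hφx : φ x = ‖x‖ := by
    have h1 : φ x ≤ ‖x‖ := by
      have := hφ_le x 1 one_pos
      rw [nq, one_smul] at this
      calc φ x ≤ (‖x + x‖ - ‖x‖) / 1 := this
        _ ≤ ‖x‖ := by rw [div_one]; have := norm_add_le x x; linarith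
    have h2 : (‖x‖ : ℝ) ≤ φ x := by rw [← hfx]; exact hle_φ x
    linarith
  have hφnx : φ (-x) = -‖x‖ := by
    have h1 : φ (-x) ≤ -‖x‖ := by
      have := hφ_le (-x) (1/2) (by norm_num)
      rw [nq] at this
      have hv : x + (1/2 : ℝ) • (-x) = (1/2 : ℝ) • x := by module
      rw [hv, norm_smul, Real.norm_eq_abs] at this
      calc φ (-x) ≤ (|1/2| * ‖x‖ - ‖x‖) / (1/2) := this
        _ = -‖x‖ := by rw [abs_of_pos (by norm_num : (0:ℝ) < 1/2)]; ring
    have h2 : -‖x‖ ≤ φ (-x) := by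
      have := hle_φ (-x)
      rw [map_neg, hfx] at this
      linarith
    linarith
  have hφ0 : φ (0 : E) = 0 := by
    have h1 : φ (0 : E) ≤ 0 := by
      have := hφ_le 0 1 one_pos
      rw [nq, smul_zero, add_zero, sub_self, zero_div] at this
      exact this
    have h2 : (0:ℝ) ≤ φ 0 := by have := hle_φ 0; rw [map_zero] at this; exact this
    linarith
  -- trivial case u = 0
  rcases eq_or_ne u 0 with rfl | hu
  · rw [show (⨅ t : Ioi (0:ℝ), nq x (t : ℝ) (0:E)) = φ 0 from rfl, hφ0, map_zero]
  -- Hahn-Banach step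
  set f₀ : E →ₗ.[ℝ] ℝ := LinearPMap.mkSpanSingleton u (φ u) hu with hf₀def
  have hf₀ : ∀ z : f₀.domain, f₀ z ≤ φ z := by
    rintro ⟨z, hz⟩
    obtain ⟨c, hc⟩ := Submodule.mem_span_singleton.1 hz
    have hmem : c • u ∈ f₀.domain := by rw [← hc] at hz; exact hz
    have hsub : (⟨z, hz⟩ : f₀.domain) = ⟨c • u, hmem⟩ := Subtype.ext hc.symm
    rw [hsub]
    have happ : f₀ ⟨c • u, hmem⟩ = c • (φ u) :=
      LinearPMap.mkSpanSingleton'_apply u (φ u) _ c _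
    rw [happ, smul_eq_mul]
    rcases lt_trichotomy c 0 with hcn | rfl | hcp
    · have h0 : φ (c • u + (-c) • u) ≤ φ (c • u) + φ ((-c) • u) := hadd _ _
      rw [← add_smul, add_neg_cancel, zero_smul, hφ0, hhom (-c) (by linarith) u] at h0
      simp only
      linarith
    · simp only [zero_smul, zero_mul, hφ0, le_refl]
    · simp only [hhom c hcp u, le_refl]
  obtain ⟨g, hg_eq, hg_le⟩ := exists_extension_of_le_sublinear f₀ φ hhom hadd hf₀
  have hgb : ∀ v : E, ‖g v‖ ≤ 1 * ‖v‖ := by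
    intro v
    have h1 : g v ≤ ‖v‖ := (hg_le v).trans ((hφ_le v 1 one_pos).trans (nq_le x v one_pos))
    have h2 : g (-v) ≤ ‖v‖ := by
      have := (hg_le (-v)).trans ((hφ_le (-v) 1 one_pos).trans (nq_le x (-v) one_pos))
      rwa [norm_neg] at this
    rw [map_neg] at h2
    rw [Real.norm_eq_abs, abs_le, one_mul]
    constructor <;> linarith
  set G : E →L[ℝ] ℝ := LinearMap.mkContinuous g 1 hgb with hGdef
  have hGapp : ∀ v : E, G v = g v := fun v => rfl
  have hGx : G x = ‖x‖ := by
    have h1 : g x ≤ ‖x‖ := (hg_le x).trans_eq hφx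
    have h2 : g (-x) ≤ -‖x‖ := (hg_le (-x)).trans_eq hφnx
    rw [map_neg] at h2
    rw [hGapp]
    linarith
  have hGnorm : ‖G‖ = 1 := by
    refine le_antisymm (LinearMap.mkContinuous_norm_le g zero_le_one hgb) ?_
    have h1 := G.le_opNorm x
    rw [hGx, Real.norm_eq_abs, abs_of_nonneg (norm_nonneg x)] at h1
    have hxpos : 0 < ‖x‖ := norm_pos_iff.2 hx
    nlinarith
  have hGf : G = f := huniq G ⟨hGnorm, hGx⟩
  have hgu : g u = φ u := by
    have h := hg_eq ⟨u, Submodule.mem_span_singleton_self u⟩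
    rw [LinearPMap.mkSpanSingleton_apply] at h
    exact h
  calc (⨅ t : Ioi (0:ℝ), nq x (t : ℝ) u) = φ u := rfl
    _ = g u := hgu.symm
    _ = G u := (hGapp u).symm
    _ = f u := by rw [hGf]
end Main

section Main2
variable {E : Type*} [NormedAddCommGroup E] [NormedSpace ℝ E] [FiniteDimensional ℝ E]

lemma hasFDerivAt_norm_of_unique (x : E) (hx : x ≠ 0) (f : E →L[ℝ] ℝ)
    (hf1 : ‖f‖ = 1) (hfx : f x = ‖x‖)
    (huniq : ∀ g : E →L[ℝ] ℝ, ‖g‖ = 1 ∧ g x = ‖x‖ → g = f) :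
    HasFDerivAt (fun y : E => ‖y‖) f x := by
  have hfle : ∀ w : E, f w ≤ ‖w‖ := by
    intro w
    calc f w ≤ |f w| := le_abs_self _
      _ ≤ ‖f‖ * ‖w‖ := f.le_opNorm w
      _ = ‖w‖ := by rw [hf1, one_mul]
  rw [hasFDerivAt_iff_isLittleO_nhds_zero, Asymptotics.isLittleO_iff]
  intro ε hε
  -- open cover of the unit sphere
  set U : {t : ℝ // 0 < t} → Set E := fun i => {v | nq x i v - f v < ε} with hU
  have hUopen : ∀ i, IsOpen (U i) := by
    intro i
    have hcont : Continuous fun v : E => nq x i v - f v := by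
      refine Continuous.sub ?_ f.continuous
      exact ((continuous_const.add (continuous_id.const_smul (i : ℝ))).norm.sub
        continuous_const).div_const _
    exact isOpen_lt hcont continuous_const
  have hcover : Metric.sphere (0 : E) 1 ⊆ ⋃ i, U i := by
    intro u _
    have hlt : (⨅ t : Set.Ioi (0:ℝ), nq x (t : ℝ) u) < f u + ε := by
      rw [phi_eq_f x hx f hf1 hfx huniq u]; linarith
    obtain ⟨t, ht⟩ := exists_lt_of_ciInf_lt hlt
    exact Set.mem_iUnion.2 ⟨⟨(t : ℝ), t.2⟩, by simpa [hU] using by linarith⟩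
  obtain ⟨s, hs⟩ := (isCompact_sphere (0 : E) 1).elim_finite_subcover U hUopen hcover
  have hxu : ‖x‖⁻¹ • x ∈ Metric.sphere (0 : E) 1 := by
    rw [mem_sphere_zero_iff_norm, norm_smul, Real.norm_eq_abs,
      abs_of_nonneg (inv_nonneg.2 (norm_nonneg x)), inv_mul_cancel₀ (norm_ne_zero_iff.2 hx)]
  obtain ⟨i₀, hi₀s, _⟩ := Set.mem_iUnion₂.1 (hs hxu)
  have hne : s.Nonempty := ⟨i₀, hi₀s⟩
  set δ : ℝ := s.inf' hne (fun i => (i : ℝ)) with hδdef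
  have hδpos : 0 < δ := by
    rw [hδdef, Finset.lt_inf'_iff]
    exact fun i _ => i.2
  filter_upwards [Metric.ball_mem_nhds (0 : E) hδpos] with v hv
  rcases eq_or_ne v 0 with rfl | hv0
  · simp
  have hvn : 0 < ‖v‖ := norm_pos_iff.2 hv0
  have hvδ : ‖v‖ < δ := by
    rw [Metric.mem_ball, dist_zero_right] at hv; exact hv
  set u : E := ‖v‖⁻¹ • v with hudef
  have husph : u ∈ Metric.sphere (0 : E) 1 := by
    rw [mem_sphere_zero_iff_norm, hudef, norm_smul, Real.norm_eq_abs,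
      abs_of_nonneg (inv_nonneg.2 (norm_nonneg v)), inv_mul_cancel₀ hvn.ne']
  obtain ⟨i, his, hui⟩ := Set.mem_iUnion₂.1 (hs husph)
  have hδi : δ ≤ (i : ℝ) := Finset.inf'_le _ his
  have hmono : nq x ‖v‖ u ≤ nq x i u := nq_mono x u hvn (by linarith)
  have hlt : nq x ‖v‖ u - f u < ε := by
    have : nq x i u - f u < ε := hui
    linarith
  have hvu : ‖v‖ • u = v := by
    rw [hudef, smul_smul, mul_inv_cancel₀ hvn.ne', one_smul]
  have hq : nq x ‖v‖ u = (‖x + v‖ - ‖x‖) / ‖v‖ := by rw [nq, hvu]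
  have hfu : f v = ‖v‖ * f u := by
    rw [hudef, map_smul, smul_eq_mul, ← mul_assoc, mul_inv_cancel₀ hvn.ne', one_mul]
  have hnonneg : 0 ≤ ‖x + v‖ - ‖x‖ - f v := by
    have h1 : f x + f v ≤ ‖x + v‖ := by
      have := hfle (x + v)
      rw [map_add] at this
      linarith
    rw [hfx] at h1
    linarith
  have hupper : ‖x + v‖ - ‖x‖ - f v ≤ ε * ‖v‖ := by
    have h2 : (‖x + v‖ - ‖x‖) / ‖v‖ - f u < ε := by rw [← hq]; exact hlt
    have h3 : ‖x + v‖ - ‖x‖ < (ε + f u) * ‖v‖ := by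
      rw [← div_lt_iff₀ hvn]; linarith
    rw [hfu]; nlinarith
  rw [Real.norm_eq_abs, abs_of_nonneg hnonneg]
  exact hupper

end Main2

theorem norm_differentiable_gradient_legendre
    {E : Type*} [NormedAddCommGroup E] [NormedSpace ℝ E] [FiniteDimensional ℝ E]
    [StrictConvexSpace ℝ E] (hsm : IsSmoothNormed E)
    (L : E → E →L[ℝ] ℝ) (hL : IsLegendre L) :
    ∀ x : E, x ≠ 0 →
      DifferentiableAt ℝ (fun y : E => ‖y‖) x ∧
      IsNormGradient (fun y : E => ‖y‖) x (‖x‖⁻¹ • x) ∧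
      L x = ‖x‖ • fderiv ℝ (fun y : E => ‖y‖) x := by
  intro x hx
  obtain ⟨f, ⟨hf1, hfx⟩, huniq'⟩ := hsm x hx
  have huniq : ∀ g : E →L[ℝ] ℝ, ‖g‖ = 1 ∧ g x = ‖x‖ → g = f := fun g hg => huniq' g hg
  have hder := hasFDerivAt_norm_of_unique x hx f hf1 hfx huniq
  have hdiff : DifferentiableAt ℝ (fun y : E => ‖y‖) x := hder.differentiableAt
  have hfderiv : fderiv ℝ (fun y : E => ‖y‖) x = f := hder.fderiv
  have hfle : ∀ w : E, f w ≤ ‖w‖ := by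
    intro w
    calc f w ≤ |f w| := le_abs_self _
      _ ≤ ‖f‖ * ‖w‖ := f.le_opNorm w
      _ = ‖w‖ := by rw [hf1, one_mul]
  have hxn : 0 < ‖x‖ := norm_pos_iff.2 hx
  have hvnorm : ‖(‖x‖⁻¹ • x : E)‖ = 1 := by
    rw [norm_smul, Real.norm_eq_abs, abs_of_nonneg (inv_nonneg.2 (norm_nonneg x)),
      inv_mul_cancel₀ hxn.ne']
  have hfv : f (‖x‖⁻¹ • x) = 1 := by
    rw [map_smul, smul_eq_mul, hfx, inv_mul_cancel₀ hxn.ne']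
  refine ⟨hdiff, ?_, ?_⟩
  · right
    refine ⟨⟨0, by simpa using hxn⟩, smul_ne_zero (inv_ne_zero hxn.ne') hx, ?_, ?_⟩
    · intro ψ hψ hsupp z hz t
      -- ψ is a positive multiple of f
      have hψn : 0 < ‖ψ‖ := by
        rcases (norm_nonneg ψ).lt_or_eq with h | h
        · exact h
        · exact absurd ((ContinuousLinearMap.opNorm_zero_iff ψ).1 h.symm) hψ
      have hψx0 : 0 ≤ ψ x := by
        have := hsupp 0 (by simp [hxn.le])
        simpa using this
      have claim : ∀ y : E, ψ y ≤ ψ x / ‖x‖ * ‖y‖ := by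
        intro y
        rcases eq_or_ne y 0 with rfl | hy
        · simp
        have hyn : 0 < ‖y‖ := norm_pos_iff.2 hy
        have h1 : ‖(‖x‖ / ‖y‖) • y‖ ≤ ‖x‖ := by
          rw [norm_smul, Real.norm_eq_abs, abs_of_nonneg (by positivity),
            div_mul_cancel₀ _ hyn.ne']
        have h2 := hsupp _ h1
        rw [map_smul, smul_eq_mul] at h2
        rw [div_mul_eq_mul_div, le_div_iff₀ hxn]
        calc ψ y * ‖x‖ = ‖y‖ * (‖x‖ / ‖y‖ * ψ y) := by field_simp
          _ ≤ ‖y‖ * ψ x := by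
              exact mul_le_mul_of_nonneg_left h2 hyn.le
          _ = ψ x * ‖y‖ := mul_comm _ _
      have hψnorm_le : ‖ψ‖ ≤ ψ x / ‖x‖ := by
        refine ψ.opNorm_le_bound (by positivity) fun y => ?_
        rw [Real.norm_eq_abs, abs_le]
        constructor
        · have := claim (-y)
          rw [map_neg, norm_neg] at this
          linarith
        · exact claim y
      have hψx : ψ x = ‖ψ‖ * ‖x‖ := by
        have h1 : ψ x ≤ ‖ψ‖ * ‖x‖ := by
          calc ψ x ≤ |ψ x| := le_abs_self _
            _ ≤ ‖ψ‖ * ‖x‖ := ψ.le_opNorm x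
        have h2 : ‖ψ‖ * ‖x‖ ≤ ψ x := by
          rw [← div_mul_cancel₀ (ψ x) hxn.ne']
          exact mul_le_mul_of_nonneg_right hψnorm_le hxn.le
        linarith
      set G : E →L[ℝ] ℝ := ‖ψ‖⁻¹ • ψ with hGdef
      have hGx : G x = ‖x‖ := by
        rw [hGdef, ContinuousLinearMap.smul_apply, smul_eq_mul, hψx, ← mul_assoc,
          inv_mul_cancel₀ hψn.ne', one_mul]
      have hGbound : ∀ w : E, ‖G w‖ ≤ 1 * ‖w‖ := by
        intro w
        rw [hGdef, ContinuousLinearMap.smul_apply, norm_smul, Real.norm_eq_abs,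
          abs_of_nonneg (inv_nonneg.2 hψn.le), one_mul]
        calc ‖ψ‖⁻¹ * ‖ψ w‖ ≤ ‖ψ‖⁻¹ * (‖ψ‖ * ‖w‖) :=
              mul_le_mul_of_nonneg_left (ψ.le_opNorm w) (inv_nonneg.2 hψn.le)
          _ = ‖w‖ := by field_simp
      have hG1 : ‖G‖ = 1 := by
        refine le_antisymm (G.opNorm_le_bound zero_le_one hGbound) ?_
        have h1 := G.le_opNorm x
        rw [hGx, Real.norm_eq_abs, abs_of_nonneg (norm_nonneg x)] at h1
        nlinarith
      have hGf : G = f := huniq G ⟨hG1, hGx⟩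
      have hfz : f z = 0 := by
        rw [← hGf, hGdef, ContinuousLinearMap.smul_apply, smul_eq_mul, hz, mul_zero]
      calc ‖(‖x‖⁻¹ • x : E)‖ = 1 := hvnorm
        _ = f (‖x‖⁻¹ • x + t • z) := by
            rw [map_add, hfv, map_smul, smul_eq_mul, hfz, mul_zero, add_zero]
        _ ≤ ‖‖x‖⁻¹ • x + t • z‖ := hfle _
    · rw [hfderiv, hfv, hvnorm]
      norm_num
  · obtain ⟨hL0, hLx⟩ := hL
    obtain ⟨hLxx, hLker⟩ := hLx x hx
    ext y
    set z : E := y - (f y / ‖x‖) • x with hzdef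
    have hfz : f z = 0 := by
      rw [hzdef, map_sub, map_smul, smul_eq_mul, hfx]
      field_simp
      ring
    have hz0 : L x z = 0 := by
      refine (hLker z).2 fun t => ?_
      calc ‖x‖ = f (x + t • z) := by
            rw [map_add, map_smul, smul_eq_mul, hfz, mul_zero, add_zero, hfx]
        _ ≤ ‖x + t • z‖ := hfle _
    have hy : y = z + (f y / ‖x‖) • x := by rw [hzdef]; abel
    have hLy : L x y = f y / ‖x‖ * (‖x‖ ^ 2) := by
      conv_lhs => rw [hy]
      rw [map_add, map_smul, hz0, zero_add, smul_eq_mul, hLxx]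
    rw [ContinuousLinearMap.smul_apply, smul_eq_mul, hfderiv, hLy]
    field_simp
end
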